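/- arXiv:2107.04185 — 2 statements merged into one kernel-verified Lean document; each statement's English description precedes it below -/
import Mathlib

section
/- Let a* ∈ ℝⁿ have all entries strictly positive, suppose B(a*) a* = a*, and let θ ∈ ℝⁿ be a strictly positive row vector with θ B(a*) = θ. Define prices P_ij = θ_i J_ij(a*) for i ≠ j. Then each agent optimizes at these prices: for every i and every a ∈ ℝ₊ⁿ satisfying Σ_{j≠i} P_ij a_j ≤ a_i Σ_{j≠i} P_ji, one has u_i(a*) ≥ u_i(a). -/
open Matrix

/-- The spectral radius of a real square matrix: the largest modulus of a
(complex) eigenvalue, i.e. of an element of the spectrum of the matrix viewed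
over `ℂ`. -/
noncomputable def specRad {n : ℕ} (M : Matrix (Fin n) (Fin n) ℝ) : ℝ :=
  sSup ((fun z : ℂ => ‖z‖) '' spectrum ℂ (M.map (Complex.ofReal : ℝ → ℂ)))

/-- The nonnegative orthant `ℝ₊ⁿ`, the domain of action profiles. -/
def nonnegOrthant (n : ℕ) : Set (Fin n → ℝ) := {x | ∀ i, 0 ≤ x i}

/-- The Jacobian matrix of the utility profile `u` at `a`:
`Jmat u a i j = ∂u_i/∂a_j (a)`. -/
noncomputable def Jmat {n : ℕ} (u : Fin n → (Fin n → ℝ) → ℝ) (a : Fin n → ℝ) :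
    Matrix (Fin n) (Fin n) ℝ :=
  Matrix.of fun i j => fderiv ℝ (u i) a (Pi.single j 1)

/-- The benefits matrix `B(a)`: `B_ij = J_ij / (-J_ii)` off the diagonal and
`B_ii = 0`. -/
noncomputable def Bmat {n : ℕ} (u : Fin n → (Fin n → ℝ) → ℝ) (a : Fin n → ℝ) :
    Matrix (Fin n) (Fin n) ℝ :=
  Matrix.of fun i j => if i = j then 0 else Jmat u a i j / (- Jmat u a i i)

/-- A nonnegative matrix is irreducible when every pair of indices is
connected by some power of the matrix. -/
def MatIrreducible {n : ℕ} (M : Matrix (Fin n) (Fin n) ℝ) : Prop :=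
  ∀ i j, ∃ k : ℕ, 1 ≤ k ∧ 0 < (M ^ k) i j

/-- `a` can be Pareto improved upon within the nonnegative orthant. -/
def ParetoImprovable {n : ℕ} (u : Fin n → (Fin n → ℝ) → ℝ) (a : Fin n → ℝ) : Prop :=
  ∃ a' : Fin n → ℝ, (∀ i, 0 ≤ a' i) ∧ (∀ i, u i a ≤ u i a') ∧ ∃ i, u i a < u i a'

/-- Agent `i`'s budget constraint at prices `P` holds at the profile `x`:
`Σ_{j≠i} P_ij x_j ≤ x_i Σ_{j≠i} P_ji`. -/
def BudgetOK {n : ℕ} (P : Matrix (Fin n) (Fin n) ℝ) (i : Fin n) (x : Fin n → ℝ) : Prop :=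
  ∑ j ∈ Finset.univ.erase i, P i j * x j ≤ x i * ∑ j ∈ Finset.univ.erase i, P j i

/-!
Concavity of `u i` gives `u_i(x) ≤ u_i(a*) + ∇u_i(a*) · (x - a*)`. Under the normalisation
`J_ii(a*) = -1` the Jacobian at `a*` is `B(a*) - 1`, so `B(a*) a* = a*` turns the gradient term
into `(B(a*) x)_i - x_i`. Because `θ B(a*) = θ`, agent `i`'s revenue `Σ_{j≠i} P_ji` is `θ_i`
while its expenditure is `θ_i (B(a*) x)_i`, so the budget constraint says precisely that the
gradient term is nonpositive.
-/

open Set Finset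

theorem ConcaveOn.le_add_of_hasFDerivAt {E : Type*} [NormedAddCommGroup E] [NormedSpace ℝ E]
    {s : Set E} {f : E → ℝ} {f' : E →L[ℝ] ℝ} {a x : E} (hf : ConcaveOn ℝ s f) (ha : a ∈ s)
    (hx : x ∈ s) (hf' : HasFDerivAt f f' a) : f x ≤ f a + f' (x - a) := by
  let g : ℝ →ᵃ[ℝ] E := AffineMap.lineMap a x
  have hconc : ConcaveOn ℝ (Icc 0 1) (f ∘ g) :=
    (hf.comp_affineMap g).subset (hf.1.mapsTo_lineMap ha hx) (convex_Icc 0 1)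
  have hderiv : HasDerivAt (f ∘ g) (f' (x - a)) 0 := by
    refine HasFDerivAt.comp_hasDerivAt (0 : ℝ) ?_ AffineMap.hasDerivAt_lineMap
    simpa [g] using hf'
  have hslope := hconc.slope_le_of_hasDerivAt (left_mem_Icc.2 zero_le_one)
    (right_mem_Icc.2 zero_le_one) zero_lt_one hderiv
  simp only [slope_def_field, Function.comp_apply, g, AffineMap.lineMap_apply_zero,
    AffineMap.lineMap_apply_one, sub_zero, div_one] at hslope
  linarith

namespace Matrix

variable {ι R : Type*} [Fintype ι] [DecidableEq ι] [NonUnitalNonAssocSemiring R]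

theorem mulVec_apply_eq_sum_erase {M : Matrix ι ι R} {i : ι} (hM : M i i = 0) (v : ι → R) :
    (M *ᵥ v) i = ∑ j ∈ univ.erase i, M i j * v j := by
  rw [mulVec, dotProduct, ← add_sum_erase _ _ (mem_univ i), hM, zero_mul, zero_add]

theorem vecMul_apply_eq_sum_erase {M : Matrix ι ι R} {i : ι} (hM : M i i = 0) (v : ι → R) :
    (v ᵥ* M) i = ∑ j ∈ univ.erase i, v j * M j i := by
  rw [vecMul, dotProduct, ← add_sum_erase _ _ (mem_univ i), hM, mul_zero, zero_add]

end Matrix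

theorem BudgetOK.mulVec_apply_le {n : ℕ} {B P : Matrix (Fin n) (Fin n) ℝ} {θ x : Fin n → ℝ}
    {i : Fin n} (hBdiag : ∀ j, B j j = 0) (hθB : θ ᵥ* B = θ) (hθ : 0 < θ i)
    (hP : ∀ j k, j ≠ k → P j k = θ j * B j k) (hbud : BudgetOK P i x) :
    (B *ᵥ x) i ≤ x i := by
  have hrevenue : ∑ j ∈ univ.erase i, P j i = θ i := by
    rw [← congrFun hθB i, vecMul_apply_eq_sum_erase (hBdiag i)]
    exact sum_congr rfl fun j hj => hP j i (ne_of_mem_erase hj)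
  have hcost : ∑ j ∈ univ.erase i, P i j * x j = θ i * (B *ᵥ x) i := by
    rw [mulVec_apply_eq_sum_erase (hBdiag i), mul_sum]
    exact sum_congr rfl fun j hj => by rw [hP i j (ne_of_mem_erase hj).symm, mul_assoc]
  unfold BudgetOK at hbud
  rw [hrevenue, hcost, mul_comm (x i)] at hbud
  exact le_of_mul_le_mul_left hbud hθ

section Jacobian

variable {n : ℕ} {u : Fin n → (Fin n → ℝ) → ℝ} {a : Fin n → ℝ}

theorem fderiv_apply_eq_Jmat_mulVec (i : Fin n) (v : Fin n → ℝ) :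
    fderiv ℝ (u i) a v = (Jmat u a *ᵥ v) i := by
  conv_lhs => rw [pi_eq_sum_univ' v, map_sum]
  simp only [map_smul, smul_eq_mul, mulVec, dotProduct, Jmat, of_apply, mul_comm]

theorem Bmat_apply_self (i : Fin n) : Bmat u a i i = 0 := by
  simp [Bmat]

theorem Jmat_eq_Bmat_sub_one (hnorm : ∀ i, Jmat u a i i = -1) : Jmat u a = Bmat u a - 1 := by
  ext i j
  by_cases hij : i = j
  · subst hij
    simp [Bmat, hnorm]
  · simp [Bmat, hij, hnorm, one_apply_ne hij]

end Jacobian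

theorem stmt11_general {n : ℕ}
    (u : Fin n → (Fin n → ℝ) → ℝ)
    (hconc : ∀ i, ConcaveOn ℝ (nonnegOrthant n) (u i))
    (hdiff : ∀ i, ContDiff ℝ 1 (u i))
    (astar : Fin n → ℝ) (hastar : ∀ i, 0 < astar i)
    (hnorm : ∀ i, Jmat u astar i i = -1)
    (hcent : Bmat u astar *ᵥ astar = astar)
    (θ : Fin n → ℝ) (hθ : ∀ i, 0 < θ i)
    (hθB : θ ᵥ* Bmat u astar = θ)
    (P : Matrix (Fin n) (Fin n) ℝ)
    (hP : ∀ i j, i ≠ j → P i j = θ i * Jmat u astar i j) :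
    ∀ i, ∀ x : Fin n → ℝ, (∀ j, 0 ≤ x j) → BudgetOK P i x → u i x ≤ u i astar := by
  intro i x hx hbud
  have hgrad := (hconc i).le_add_of_hasFDerivAt (fun j => (hastar j).le) hx
    ((hdiff i).differentiable one_ne_zero astar).hasFDerivAt
  have hdir : fderiv ℝ (u i) astar (x - astar) = (Bmat u astar *ᵥ x) i - x i := by
    rw [fderiv_apply_eq_Jmat_mulVec, Jmat_eq_Bmat_sub_one hnorm, mulVec_sub, sub_mulVec,
      sub_mulVec, one_mulVec, one_mulVec, hcent, sub_self, sub_zero, Pi.sub_apply]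
  have hPB : ∀ j k, j ≠ k → P j k = θ j * Bmat u astar j k := fun j k hjk => by
    rw [hP j k hjk, Jmat_eq_Bmat_sub_one hnorm, Matrix.sub_apply, one_apply_ne hjk, sub_zero]
  have hBx := hbud.mulVec_apply_le Bmat_apply_self hθB (hθ i) hPB
  linarith

/-- At the guessed Lindahl prices `P_ij = θ_i J_ij(astar)` (for `i ≠ j`),
every agent is optimizing: `astar` maximizes `u_i` over all nonnegative
profiles satisfying agent `i`'s budget constraint. Utilities are normalized
so that `J_ii(astar) = -1`. -/
theorem stmt11 {n : ℕ} (hn : 1 ≤ n)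
    (u : Fin n → (Fin n → ℝ) → ℝ)
    (hconc : ∀ i, ConcaveOn ℝ (nonnegOrthant n) (u i))
    (hdiff : ∀ i, ContDiff ℝ 1 (u i))
    (hCA : ∀ a ∈ nonnegOrthant n, ∀ i, Jmat u a i i < 0)
    (hPE : ∀ a ∈ nonnegOrthant n, ∀ i j, i ≠ j → 0 ≤ Jmat u a i j)
    (hirr : ∀ a ∈ nonnegOrthant n, MatIrreducible (Bmat u a))
    (astar : Fin n → ℝ) (hastar : ∀ i, 0 < astar i)
    (hnorm : ∀ i, Jmat u astar i i = -1)
    (hcent : Bmat u astar *ᵥ astar = astar)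
    (θ : Fin n → ℝ) (hθ : ∀ i, 0 < θ i)
    (hθB : θ ᵥ* Bmat u astar = θ)
    (P : Matrix (Fin n) (Fin n) ℝ)
    (hP : ∀ i j, i ≠ j → P i j = θ i * Jmat u astar i j) :
    ∀ i, ∀ x : Fin n → ℝ, (∀ j, 0 ≤ x j) → BudgetOK P i x → u i x ≤ u i astar :=
  stmt11_general u hconc hdiff astar hastar hnorm hcent θ hθ hθB P hP
end

section
/- Fix an agent i, and let B^{[−i]}(0) denote the matrix obtained from B(0) by setting every entry in row i and column i to zero. Suppose r(B(0)) > 1 and r(B^{[−i]}(0)) < 1. Then (a) there exists a ∈ ℝ₊ⁿ with u_j(a) ≥ u_j(0) for all j and u_j(a) > u_j(0) for some j (a Pareto improvement on 0 exists when i participates); and (b) there is no a ∈ ℝ₊ⁿ with a_i = 0 such that u_j(a) ≥ u_j(0) for all j ≠ i and u_j(a) > u_j(0) for some j ≠ i (no Pareto improvement for the other agents exists when i's action is fixed at 0). -/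
/-!
(a) A nonnegative irreducible matrix `B` with `r(B) > 1` has a positive vector `w` with
`B w > w`: the entrywise modulus `v` of an eigenvector for an eigenvalue of modulus `r(B)`
satisfies `r(B) v ≤ B v`, and irreducibility makes `w = ∑_{l ≤ K} B^l v` positive with
`B w ≥ r(B) w`. For `B = B(0)` the inequality `B w > w` says exactly `J(0) w > 0`, so
every utility strictly increases along `t • w` for small `t > 0`.

(b) By concavity `u_j(a) - u_j(0) ≤ (J(0) a)_j`, so a Pareto improvement `a ≥ 0, a ≠ 0`
with `a_i = 0` satisfies `a ≤ B^{[-i]}(0) a`. Then `a ≤ (B^{[-i]}(0))^k a` for all `k`,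
the powers have operator norm at least `1`, and Gelfand's formula gives
`r(B^{[-i]}(0)) ≥ 1`.
-/

open Matrix

open Filter Topology

/-- The paper's `B^{[-i]}`, for an arbitrary matrix in place of `B`. -/
def zeroRowCol {ι R : Type*} [Zero R] [DecidableEq ι] (M : Matrix ι ι R) (i : ι) :
    Matrix ι ι R :=
  Matrix.of fun j k => if j = i ∨ k = i then 0 else M j k

lemma zeroRowCol_nonneg {ι : Type*} [DecidableEq ι] {M : Matrix ι ι ℝ}
    (hM : ∀ i j, 0 ≤ M i j) (i : ι) : ∀ j k, 0 ≤ zeroRowCol M i j k := by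
  intro j k
  simp only [zeroRowCol, of_apply]
  split_ifs
  exacts [le_rfl, hM j k]

section NonnegMatrix

variable {ι : Type*} [Fintype ι] {M : Matrix ι ι ℝ}

lemma mulVec_mono_of_nonneg (hM : ∀ i j, 0 ≤ M i j) {x y : ι → ℝ} (hxy : x ≤ y) :
    M *ᵥ x ≤ M *ᵥ y := fun i =>
  Finset.sum_le_sum fun j _ => mul_le_mul_of_nonneg_left (hxy j) (hM i j)

variable [DecidableEq ι]

lemma le_pow_mulVec_of_le_mulVec (hM : ∀ i j, 0 ≤ M i j) {a : ι → ℝ} (ha : a ≤ M *ᵥ a)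
    (k : ℕ) : a ≤ M ^ k *ᵥ a := by
  induction k with
  | zero => simp
  | succ k ih =>
    calc a ≤ M ^ k *ᵥ a := ih
      _ ≤ M ^ k *ᵥ (M *ᵥ a) := mulVec_mono_of_nonneg (pow_apply_nonneg hM k) ha
      _ = M ^ (k + 1) *ᵥ a := by rw [mulVec_mulVec, pow_succ]

lemma zeroRowCol_mulVec_self (i : ι) (x : ι → ℝ) : (zeroRowCol M i *ᵥ x) i = 0 := by
  simp [zeroRowCol, mulVec, dotProduct]

lemma zeroRowCol_mulVec_of_ne {i j : ι} {x : ι → ℝ} (hx : x i = 0) (hj : j ≠ i) :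
    (zeroRowCol M i *ᵥ x) j = (M *ᵥ x) j := by
  refine Finset.sum_congr rfl fun k _ => ?_
  by_cases hk : k = i
  · simp [hk, hx]
  · simp [zeroRowCol, hj, hk]

end NonnegMatrix

lemma one_le_spectralRadius_of_forall_one_le_norm_pow {A : Type*} [NormedRing A]
    [NormedAlgebra ℂ A] [CompleteSpace A] {a : A} (h : ∀ k : ℕ, 1 ≤ ‖a ^ k‖) :
    1 ≤ spectralRadius ℂ a := by
  refine ge_of_tendsto (spectrum.pow_nnnorm_pow_one_div_tendsto_nhds_spectralRadius a) ?_
  filter_upwards [eventually_gt_atTop 0] with k hk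
  exact ENNReal.one_le_rpow (by exact_mod_cast h k) (by positivity)

section LinftyOpNorm

attribute [local instance] Matrix.linftyOpNormedRing Matrix.linftyOpNormedAlgebra

lemma one_le_norm_pow_map_ofReal_of_le_mulVec {ι : Type*} [Fintype ι] [DecidableEq ι]
    {M : Matrix ι ι ℝ} (hM : ∀ i j, 0 ≤ M i j) {a : ι → ℝ} (ha0 : 0 ≤ a)
    (ha : a ≠ 0) (hle : a ≤ M *ᵥ a) (k : ℕ) : 1 ≤ ‖M.map Complex.ofReal ^ k‖ := by
  set ac : ι → ℂ := fun j => (a j : ℂ)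
  have hac : 0 < ‖ac‖ :=
    norm_pos_iff.2 fun h => ha (funext fun j => by simpa [ac] using congrFun h j)
  have hmv : ‖ac‖ ≤ ‖M.map Complex.ofReal ^ k *ᵥ ac‖ := by
    refine (pi_norm_le_iff_of_nonneg (norm_nonneg _)).2 fun j => ?_
    calc ‖ac j‖ = a j := by simp [ac, abs_of_nonneg (ha0 j)]
      _ ≤ (M ^ k *ᵥ a) j := le_pow_mulVec_of_le_mulVec hM hle k j
      _ ≤ ‖((M ^ k *ᵥ a) j : ℂ)‖ := by rw [Complex.norm_real]; exact Real.le_norm_self _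
      _ = ‖(M.map Complex.ofReal ^ k *ᵥ ac) j‖ := by
        rw [← Complex.ofRealHom_eq_coe, RingHom.map_mulVec, Matrix.map_pow]; rfl
      _ ≤ ‖M.map Complex.ofReal ^ k *ᵥ ac‖ := norm_le_pi_norm _ j
  exact le_of_mul_le_mul_right (by simpa using hmv.trans (linfty_opNorm_mulVec _ _)) hac

variable {n : ℕ} {M : Matrix (Fin n) (Fin n) ℝ}

lemma norm_le_specRad {z : ℂ} (hz : z ∈ spectrum ℂ (M.map Complex.ofReal)) :
    ‖z‖ ≤ specRad M :=
  le_csSup ((spectrum.isCompact _).image continuous_norm).bddAbove ⟨z, hz, rfl⟩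

lemma exists_mem_spectrum_norm_eq_specRad (h : specRad M ≠ 0) :
    ∃ z ∈ spectrum ℂ (M.map Complex.ofReal), ‖z‖ = specRad M := by
  have hne : (spectrum ℂ (M.map Complex.ofReal)).Nonempty := by
    -- `sSup ∅ = 0`
    contrapose! h
    simp [specRad, h]
  exact ((spectrum.isCompact _).image continuous_norm).sSup_mem (hne.image _)

lemma spectralRadius_le_ofReal_specRad :
    spectralRadius ℂ (M.map Complex.ofReal) ≤ ENNReal.ofReal (specRad M) :=
  iSup₂_le fun z hz =>
    (ofReal_norm z).symm.trans_le (ENNReal.ofReal_le_ofReal (norm_le_specRad hz))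

lemma one_le_specRad_of_le_mulVec (hM : ∀ i j, 0 ≤ M i j) {a : Fin n → ℝ} (ha0 : 0 ≤ a)
    (ha : a ≠ 0) (hle : a ≤ M *ᵥ a) : 1 ≤ specRad M :=
  ENNReal.one_le_ofReal.1 <| (one_le_spectralRadius_of_forall_one_le_norm_pow
    (one_le_norm_pow_map_ofReal_of_le_mulVec hM ha0 ha hle)).trans
    spectralRadius_le_ofReal_specRad

end LinftyOpNorm

section SubinvariantVectors

variable {n : ℕ} {M : Matrix (Fin n) (Fin n) ℝ}

lemma exists_nonneg_specRad_smul_le_mulVec (hM : ∀ i j, 0 ≤ M i j) (h : specRad M ≠ 0) :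
    ∃ v : Fin n → ℝ, 0 ≤ v ∧ v ≠ 0 ∧ specRad M • v ≤ M *ᵥ v := by
  obtain ⟨z, hz, hzr⟩ := exists_mem_spectrum_norm_eq_specRad h
  rw [← spectrum_toLin', ← Module.End.hasEigenvalue_iff_mem_spectrum] at hz
  obtain ⟨w, hw⟩ := hz.exists_hasEigenvector
  have hMw : M.map Complex.ofReal *ᵥ w = z • w := by simpa using hw.apply_eq_smul
  refine ⟨fun j => ‖w j‖, fun j => norm_nonneg _,
    fun h0 => hw.2 (funext fun j => norm_eq_zero.1 (congrFun h0 j)), fun j => ?_⟩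
  calc specRad M * ‖w j‖ = ‖(M.map Complex.ofReal *ᵥ w) j‖ := by
        rw [hMw, Pi.smul_apply, smul_eq_mul, norm_mul, hzr]
    _ = ‖∑ k, (M j k : ℂ) * w k‖ := rfl
    _ ≤ ∑ k, ‖(M j k : ℂ) * w k‖ := norm_sum_le _ _
    _ = (M *ᵥ fun k => ‖w k‖) j := by
        simp [mulVec, dotProduct, Complex.norm_real, abs_of_nonneg (hM _ _)]

lemma exists_pos_lt_mulVec_of_one_lt_specRad (hM : ∀ i j, 0 ≤ M i j)
    (hirr : MatIrreducible M) (h1 : 1 < specRad M) :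
    ∃ w : Fin n → ℝ, (∀ i, 0 < w i) ∧ ∀ i, w i < (M *ᵥ w) i := by
  obtain ⟨v, hv0, hv, hMv⟩ := exists_nonneg_specRad_smul_le_mulVec hM (by positivity)
  obtain ⟨j, hj⟩ : ∃ j, 0 < v j := by
    by_contra! h
    exact hv (le_antisymm h hv0)
  choose k _ hk using fun i => hirr i j
  set K := Finset.univ.sup k + 1
  set w := ∑ l ∈ Finset.range K, M ^ l *ᵥ v
  have hw : ∀ i, 0 < w i := by
    intro i
    have hterm : ∀ l, 0 ≤ (M ^ l *ᵥ v) i := fun l => by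
      simpa using mulVec_mono_of_nonneg (pow_apply_nonneg hM l) hv0 i
    calc 0 < (M ^ k i) i j * v j := mul_pos (hk i) hj
      _ ≤ (M ^ k i *ᵥ v) i := Finset.single_le_sum (f := fun m => (M ^ k i) i m * v m)
          (fun m _ => mul_nonneg (pow_apply_nonneg hM _ i m) (hv0 m)) (Finset.mem_univ j)
      _ ≤ ∑ l ∈ Finset.range K, (M ^ l *ᵥ v) i := Finset.single_le_sum (fun l _ => hterm l)
          (Finset.mem_range.2 (Nat.lt_succ_of_le (Finset.le_sup (Finset.mem_univ i))))
      _ = w i := (Finset.sum_apply i _ _).symm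
  have hMw : specRad M • w ≤ M *ᵥ w :=
    calc specRad M • w = ∑ l ∈ Finset.range K, M ^ l *ᵥ (specRad M • v) := by
          simp only [w, Finset.smul_sum, mulVec_smul]
      _ ≤ ∑ l ∈ Finset.range K, M ^ l *ᵥ (M *ᵥ v) :=
          Finset.sum_le_sum fun l _ => mulVec_mono_of_nonneg (pow_apply_nonneg hM l) hMv
      _ = M *ᵥ w := by
          simp only [w, mulVec_sum, mulVec_mulVec, ← pow_succ, pow_succ']
  exact ⟨w, hw, fun i => (lt_mul_of_one_lt_left (hw i) h1).trans_le (hMw i)⟩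

end SubinvariantVectors

section DirectionalDerivative

variable {E : Type*} [NormedAddCommGroup E] [NormedSpace ℝ E] {f : E → ℝ}

lemma hasDerivAt_comp_smul_zero (hf : DifferentiableAt ℝ f 0) (w : E) :
    HasDerivAt (fun t : ℝ => f (t • w)) (fderiv ℝ f 0 w) 0 := by
  have hf' : HasFDerivAt f (fderiv ℝ f 0) ((0 : ℝ) • w) := by
    simpa using hf.hasFDerivAt
  exact hf'.comp_hasDerivAt 0 (by simpa using (hasDerivAt_id (0 : ℝ)).smul_const w)

lemma ConcaveOn.sub_le_fderiv_zero {s : Set E} (hf : ConcaveOn ℝ s f) (h0 : (0 : E) ∈ s)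
    {a : E} (ha : a ∈ s) (hd : DifferentiableAt ℝ f 0) : f a - f 0 ≤ fderiv ℝ f 0 a := by
  have hline := hf.comp_linearMap (LinearMap.toSpanSingleton ℝ E a)
  have := hline.slope_le_of_hasDerivAt (x := 0) (y := 1) (by simpa) (by simpa) one_pos
    (hasDerivAt_comp_smul_zero hd a)
  simpa [slope] using this

lemma eventually_lt_comp_smul_of_fderiv_pos (hd : DifferentiableAt ℝ f 0) {w : E}
    (hw : 0 < fderiv ℝ f 0 w) : ∀ᶠ t in 𝓝[>] (0 : ℝ), f 0 < f (t • w) := by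
  filter_upwards [(hasDerivAt_comp_smul_zero hd w).tendsto_slope_zero_right.eventually
    (lt_mem_nhds hw), self_mem_nhdsWithin] with t ht (htpos : 0 < t)
  simp only [zero_add, zero_smul, smul_eq_mul] at ht
  exact sub_pos.1 ((mul_pos_iff_of_pos_left (inv_pos.2 htpos)).1 ht)

end DirectionalDerivative

section Game

variable {n : ℕ} (u : Fin n → (Fin n → ℝ) → ℝ)

lemma Jmat_mulVec (a w : Fin n → ℝ) (j : Fin n) :
    (Jmat u a *ᵥ w) j = fderiv ℝ (u j) a w := by
  conv_rhs => rw [← Finset.univ_sum_single w]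
  simp only [mulVec, dotProduct, Jmat, of_apply, map_sum]
  refine Finset.sum_congr rfl fun k _ => ?_
  rw [mul_comm, ← smul_eq_mul, ← map_smul, ← Pi.single_smul', smul_eq_mul, mul_one]

lemma Bmat_mulVec_sub {a : Fin n → ℝ} {j : Fin n} (hj : Jmat u a j j ≠ 0)
    (x : Fin n → ℝ) :
    (Bmat u a *ᵥ x) j - x j = (Jmat u a *ᵥ x) j / -Jmat u a j j := by
  have hterm : ∀ k, Bmat u a j k * x k * -Jmat u a j j =
      Jmat u a j k * x k - if j = k then Jmat u a j j * x j else 0 := by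
    intro k
    by_cases h : j = k
    · subst h
      simp [Bmat]
    · simp only [Bmat, of_apply, h, if_false, sub_zero]
      field_simp
  have hsum :
      (Bmat u a *ᵥ x) j * -Jmat u a j j = (Jmat u a *ᵥ x) j - Jmat u a j j * x j := by
    simp only [mulVec, dotProduct, Finset.sum_mul, hterm, Finset.sum_sub_distrib,
      Finset.sum_ite_eq, Finset.mem_univ, if_true]
  rw [eq_div_iff (neg_ne_zero.2 hj)]
  linear_combination hsum

lemma lt_Bmat_mulVec_iff {a : Fin n → ℝ} {j : Fin n} (hj : Jmat u a j j < 0)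
    (x : Fin n → ℝ) :
    x j < (Bmat u a *ᵥ x) j ↔ 0 < (Jmat u a *ᵥ x) j := by
  rw [← sub_pos, Bmat_mulVec_sub u hj.ne, div_pos_iff_of_pos_right (neg_pos.2 hj)]

lemma le_Bmat_mulVec_iff {a : Fin n → ℝ} {j : Fin n} (hj : Jmat u a j j < 0)
    (x : Fin n → ℝ) :
    x j ≤ (Bmat u a *ᵥ x) j ↔ 0 ≤ (Jmat u a *ᵥ x) j := by
  rw [← sub_nonneg, Bmat_mulVec_sub u hj.ne, le_div_iff₀ (neg_pos.2 hj), zero_mul]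

lemma Bmat_nonneg {a : Fin n → ℝ} (hCA : ∀ j, Jmat u a j j < 0)
    (hPE : ∀ j k, j ≠ k → 0 ≤ Jmat u a j k) : ∀ j k, 0 ≤ Bmat u a j k := by
  intro j k
  simp only [Bmat, of_apply]
  split_ifs with h
  exacts [le_rfl, div_nonneg (hPE j k h) (neg_nonneg.2 (hCA j).le)]

lemma paretoImprovable_zero_of_one_lt_specRad [Nonempty (Fin n)]
    (hdiff : ∀ j, DifferentiableAt ℝ (u j) 0) (hCA : ∀ j, Jmat u 0 j j < 0)
    (hPE : ∀ j k, j ≠ k → 0 ≤ Jmat u 0 j k) (hirr : MatIrreducible (Bmat u 0))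
    (h1 : 1 < specRad (Bmat u 0)) : ParetoImprovable u 0 := by
  obtain ⟨w, hw, hBw⟩ := exists_pos_lt_mulVec_of_one_lt_specRad (Bmat_nonneg u hCA hPE) hirr h1
  have hJw : ∀ j, 0 < fderiv ℝ (u j) 0 w := fun j => by
    rw [← Jmat_mulVec, ← lt_Bmat_mulVec_iff u (hCA j)]
    exact hBw j
  obtain ⟨t, ht, htpos⟩ := ((eventually_all.2 fun j =>
    eventually_lt_comp_smul_of_fderiv_pos (hdiff j) (hJw j)).and self_mem_nhdsWithin).exists
  exact ⟨t • w, fun j => mul_nonneg (le_of_lt htpos) (hw j).le, fun j => (ht j).le,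
    Classical.arbitrary _, ht _⟩

lemma le_zeroRowCol_Bmat_mulVec (hconc : ∀ j, ConcaveOn ℝ (nonnegOrthant n) (u j))
    (hdiff : ∀ j, DifferentiableAt ℝ (u j) 0) (hCA : ∀ j, Jmat u 0 j j < 0) {i : Fin n}
    {a : Fin n → ℝ} (ha : a ∈ nonnegOrthant n) (hai : a i = 0)
    (hge : ∀ j, j ≠ i → u j 0 ≤ u j a) : a ≤ zeroRowCol (Bmat u 0) i *ᵥ a := by
  intro j
  by_cases hji : j = i
  · rw [hji, zeroRowCol_mulVec_self, hai]
  · rw [zeroRowCol_mulVec_of_ne hai hji, le_Bmat_mulVec_iff u (hCA j), Jmat_mulVec]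
    exact (sub_nonneg.2 (hge j hji)).trans
      ((hconc j).sub_le_fderiv_zero (fun _ => le_rfl) ha (hdiff j))

end Game

theorem stmt14_general {n : ℕ}
    (u : Fin n → (Fin n → ℝ) → ℝ)
    (hconc : ∀ i, ConcaveOn ℝ (nonnegOrthant n) (u i))
    (hdiff : ∀ i, ContDiff ℝ 1 (u i))
    (hCA : ∀ a ∈ nonnegOrthant n, ∀ i, Jmat u a i i < 0)
    (hPE : ∀ a ∈ nonnegOrthant n, ∀ i j, i ≠ j → 0 ≤ Jmat u a i j)
    (hirr : ∀ a ∈ nonnegOrthant n, MatIrreducible (Bmat u a))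
    (i : Fin n)
    (h1 : 1 < specRad (Bmat u (0 : Fin n → ℝ)))
    (h2 : specRad (Matrix.of fun j k =>
        if j = i ∨ k = i then 0 else Bmat u (0 : Fin n → ℝ) j k) < 1) :
    (∃ a : Fin n → ℝ, (∀ j, 0 ≤ a j) ∧
        (∀ j, u j (0 : Fin n → ℝ) ≤ u j a) ∧ ∃ j, u j (0 : Fin n → ℝ) < u j a) ∧
    ¬ ∃ a : Fin n → ℝ, (∀ j, 0 ≤ a j) ∧ a i = 0 ∧
        (∀ j, j ≠ i → u j (0 : Fin n → ℝ) ≤ u j a) ∧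
        ∃ j, j ≠ i ∧ u j (0 : Fin n → ℝ) < u j a := by
  have h0 : (0 : Fin n → ℝ) ∈ nonnegOrthant n := fun _ => le_rfl
  have hdiff0 : ∀ j, DifferentiableAt ℝ (u j) 0 :=
    fun j => (hdiff j).differentiable one_ne_zero 0
  have : Nonempty (Fin n) := ⟨i⟩
  refine ⟨paretoImprovable_zero_of_one_lt_specRad u hdiff0 (hCA 0 h0) (hPE 0 h0) (hirr 0 h0) h1,
    ?_⟩
  rintro ⟨a, ha, hai, hge, j, -, hlt⟩
  have ha0 : a ≠ 0 := by
    rintro rfl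
    exact lt_irrefl _ hlt
  exact h2.not_ge <| one_le_specRad_of_le_mulVec
    (zeroRowCol_nonneg (Bmat_nonneg u (hCA 0 h0) (hPE 0 h0)) i) ha ha0
    (le_zeroRowCol_Bmat_mulVec u hconc hdiff0 (hCA 0 h0) ha hai hge)

/-- Essential agents: if `r(B(0)) > 1` but the spectral radius of the matrix
obtained by zeroing out row and column `i` is `< 1`, then a Pareto
improvement on `0` exists, but none exists once agent `i`'s action is fixed
at `0`. -/
theorem stmt14 {n : ℕ} (hn : 1 ≤ n)
    (u : Fin n → (Fin n → ℝ) → ℝ)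
    (hconc : ∀ i, ConcaveOn ℝ (nonnegOrthant n) (u i))
    (hdiff : ∀ i, ContDiff ℝ 1 (u i))
    (hCA : ∀ a ∈ nonnegOrthant n, ∀ i, Jmat u a i i < 0)
    (hPE : ∀ a ∈ nonnegOrthant n, ∀ i j, i ≠ j → 0 ≤ Jmat u a i j)
    (hirr : ∀ a ∈ nonnegOrthant n, MatIrreducible (Bmat u a))
    (i : Fin n)
    (h1 : 1 < specRad (Bmat u (0 : Fin n → ℝ)))
    (h2 : specRad (Matrix.of fun j k =>
        if j = i ∨ k = i then 0 else Bmat u (0 : Fin n → ℝ) j k) < 1) :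
    (∃ a : Fin n → ℝ, (∀ j, 0 ≤ a j) ∧
        (∀ j, u j (0 : Fin n → ℝ) ≤ u j a) ∧ ∃ j, u j (0 : Fin n → ℝ) < u j a) ∧
    ¬ ∃ a : Fin n → ℝ, (∀ j, 0 ≤ a j) ∧ a i = 0 ∧
        (∀ j, j ≠ i → u j (0 : Fin n → ℝ) ≤ u j a) ∧
        ∃ j, j ≠ i ∧ u j (0 : Fin n → ℝ) < u j a :=
  stmt14_general u hconc hdiff hCA hPE hirr i h1 h2
end
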